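/- arXiv:1907.10196 — 5 statements merged into one kernel-verified Lean document; each statement's English description precedes it below -/
import Mathlib

section
/- For a path γ of length n from x to y in a finite connected graph, the set of first-entrance edges forms a spanning tree of the set of vertices visited by γ; equivalently, the graph on V(γ) whose edges are the first-entrance edges (one for each vertex of γ other than x) is connected and acyclic. -/
/-!
Let `firstVisit γ v` be the first time `γ` visits `v`. Every first-entrance edge joins a
visited vertex `v ≠ γ 0` to its parent `γ (firstVisit γ v - 1)`, which was visited strictly
earlier. Hence, ordering the visited vertices by first visit, each of them other than `γ 0` has
exactly one earlier neighbour: following parents connects everything to `γ 0`, and on a cycle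
the latest visited vertex would have two distinct earlier neighbours.
-/

open scoped Classical

/-- The first-entrance tree of a path of length `n`: for each vertex other than the start
that is visited, the (unoriented) edge by which it was first entered. -/
def feTree {V : Type*} (γ : ℕ → V) (n : ℕ) : Set (Sym2 V) :=
  {e | ∃ i, 0 < i ∧ i ≤ n ∧ (∀ j < i, γ j ≠ γ i) ∧ e = s(γ (i - 1), γ i)}

/-- The simple graph on `V` whose edges are a given set of unordered pairs. -/
def edgeGraph {V : Type*} (E : Set (Sym2 V)) : SimpleGraph V where
  Adj a b := a ≠ b ∧ s(a, b) ∈ E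
  symm := ⟨fun a b h => ⟨h.1.symm, by rw [Sym2.eq_swap]; exact h.2⟩⟩
  loopless := ⟨fun a h => h.1 rfl⟩

namespace SimpleGraph

variable {V α : Type*} [LinearOrder α] {H : SimpleGraph V}

theorem isAcyclic_of_lowerNeighbor_unique (f : V → α)
    (hne : ∀ ⦃a b⦄, H.Adj a b → f a ≠ f b)
    (huniq : ∀ ⦃u a b⦄, H.Adj a u → H.Adj b u → f a < f u → f b < f u → a = b) :
    H.IsAcyclic := by
  intro v c hc
  obtain ⟨u, hu, hmax⟩ := c.support.toFinset.exists_max_image f ⟨v, by simp⟩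
  rw [List.mem_toFinset] at hu
  set c' := c.rotate u hu
  have hc' : c'.IsCycle := hc.rotate hu
  have hlower : ∀ w ∈ c'.support, H.Adj w u → f w < f u := fun w hw hwu =>
    lt_of_le_of_ne (hmax w (by simpa [c', Walk.mem_support_rotate_iff] using hw)) (hne hwu)
  have hsnd : H.Adj c'.snd u := (c'.adj_snd hc'.not_nil).symm
  have hpen : H.Adj c'.penultimate u := c'.adj_penultimate hc'.not_nil
  exact hc'.snd_ne_penultimate <| huniq hsnd hpen
    (hlower _ (c'.getVert_mem_support _) hsnd) (hlower _ (c'.getVert_mem_support _) hpen)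

theorem induce_connected_of_exists_lowerNeighbor {S : Set V} {r : V} (hr : r ∈ S) (f : V → ℕ)
    (hlower : ∀ v ∈ S, v ≠ r → ∃ p ∈ S, H.Adj p v ∧ f p < f v) :
    (H.induce S).Connected := by
  have hreach : ∀ v : S, (H.induce S).Reachable ⟨r, hr⟩ v := by
    intro v
    induction h : f v using Nat.strong_induction_on generalizing v with
    | _ k ih =>
      by_cases hvr : (v : V) = r
      · obtain rfl : v = ⟨r, hr⟩ := Subtype.ext hvr
        rfl
      · obtain ⟨p, hpS, hpv, hlt⟩ := hlower v v.2 hvr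
        exact (ih _ (h ▸ hlt) ⟨p, hpS⟩ rfl).trans (Adj.reachable (G := H.induce S) hpv)
  have : Nonempty S := ⟨⟨r, hr⟩⟩
  exact ⟨fun a b => (hreach a).symm.trans (hreach b)⟩

end SimpleGraph

section FirstEntrance

variable {V : Type*} {γ : ℕ → V} {n i : ℕ} {v : V}

-- `0` for a vertex that is never visited (`sInf ∅ = 0`).
noncomputable def firstVisit (γ : ℕ → V) (v : V) : ℕ := sInf {i | γ i = v}

theorem apply_firstVisit (h : γ i = v) : γ (firstVisit γ v) = v :=
  Nat.sInf_mem (s := {i | γ i = v}) ⟨i, h⟩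

theorem firstVisit_le (h : γ i = v) : firstVisit γ v ≤ i := Nat.sInf_le h

theorem apply_ne_of_lt_firstVisit {j : ℕ} (h : j < firstVisit γ v) : γ j ≠ v :=
  Nat.notMem_of_lt_sInf h

theorem firstVisit_apply_of_forall_ne (h : ∀ j < i, γ j ≠ γ i) : firstVisit γ (γ i) = i :=
  (firstVisit_le rfl).antisymm <| not_lt.mp fun hlt => h _ hlt (apply_firstVisit rfl)

theorem firstVisit_injOn : Set.InjOn (firstVisit γ) (Set.range γ) := by
  rintro _ ⟨i, rfl⟩ _ ⟨j, rfl⟩ h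
  rw [← apply_firstVisit (γ := γ) (i := i) rfl, h, apply_firstVisit (γ := γ) (i := j) rfl]

theorem exists_firstVisit_eq_of_feTree_adj {a b : V}
    (h : (edgeGraph (feTree γ n)).Adj a b) :
    ∃ i, firstVisit γ (γ i) = i ∧
      (a = γ (i - 1) ∧ b = γ i ∨ a = γ i ∧ b = γ (i - 1)) := by
  obtain ⟨-, i, -, -, hfirst, he⟩ := h
  exact ⟨i, firstVisit_apply_of_forall_ne hfirst, Sym2.eq_iff.mp he⟩

theorem mem_range_of_feTree_adj {a b : V} (h : (edgeGraph (feTree γ n)).Adj a b) :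
    a ∈ Set.range γ := by
  obtain ⟨i, -, ⟨rfl, -⟩ | ⟨rfl, -⟩⟩ := exists_firstVisit_eq_of_feTree_adj h <;>
    exact ⟨_, rfl⟩

theorem feTree_adj_firstVisit_ne {a b : V} (h : (edgeGraph (feTree γ n)).Adj a b) :
    firstVisit γ a ≠ firstVisit γ b := fun heq =>
  h.ne <| firstVisit_injOn (mem_range_of_feTree_adj h) (mem_range_of_feTree_adj h.symm) heq

theorem eq_of_feTree_adj_of_firstVisit_lt {a u : V} (h : (edgeGraph (feTree γ n)).Adj a u)
    (hlt : firstVisit γ a < firstVisit γ u) : a = γ (firstVisit γ u - 1) := by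
  obtain ⟨i, hi, ⟨rfl, rfl⟩ | ⟨rfl, rfl⟩⟩ := exists_firstVisit_eq_of_feTree_adj h
  · rw [hi]
  · have := firstVisit_le (γ := γ) (i := i - 1) rfl
    omega

theorem exists_feTree_adj_firstVisit_lt (hv : ∃ i ≤ n, γ i = v) (hv0 : v ≠ γ 0) :
    ∃ p ∈ {w | ∃ i ≤ n, γ i = w}, (edgeGraph (feTree γ n)).Adj p v ∧
      firstVisit γ p < firstVisit γ v := by
  obtain ⟨i, hin, hi⟩ := hv
  set k := firstVisit γ v
  have hk : γ k = v := apply_firstVisit hi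
  have hpos : 0 < k := Nat.pos_of_ne_zero fun h0 => hv0 (by rw [← hk, h0])
  have hfirst : ∀ j < k, γ j ≠ γ k := fun j hj => hk ▸ apply_ne_of_lt_firstVisit hj
  have hkn : k ≤ n := (firstVisit_le hi).trans hin
  refine ⟨γ (k - 1), ⟨k - 1, by omega, rfl⟩, ?_, (firstVisit_le rfl).trans_lt (by omega)⟩
  exact ⟨fun h => hfirst (k - 1) (by omega) (h.trans hk.symm), k, hpos, hkn, hfirst, by rw [hk]⟩

end FirstEntrance

theorem stmt1_general {V : Type*} (n : ℕ) (γ : ℕ → V) :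
    ((edgeGraph (feTree γ n)).induce {v | ∃ i ≤ n, γ i = v}).IsTree := by
  refine ⟨?_, ?_⟩
  · exact SimpleGraph.induce_connected_of_exists_lowerNeighbor ⟨0, n.zero_le, rfl⟩
      (firstVisit γ) fun _ => exists_feTree_adj_firstVisit_lt
  · refine (SimpleGraph.isAcyclic_of_lowerNeighbor_unique (firstVisit γ)
      (fun _ _ => feTree_adj_firstVisit_ne) fun _ _ _ ha hb hla hlb => ?_).induce _
    exact (eq_of_feTree_adj_of_firstVisit_lt ha hla).trans
      (eq_of_feTree_adj_of_firstVisit_lt hb hlb).symm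

/-- The first-entrance edges of a path form a spanning tree of the set of visited
vertices: the induced graph is connected and acyclic, i.e. a tree. -/
theorem stmt1 {V : Type*} [Fintype V] [DecidableEq V] (G : SimpleGraph V)
    (hconn : G.Connected) (x y : V) (n : ℕ) (γ : ℕ → V)
    (h0 : γ 0 = x) (hn : γ n = y)
    (hadj : ∀ i < n, G.Adj (γ i) (γ (i + 1))) :
    ((edgeGraph (feTree γ n)).induce {v | ∃ i ≤ n, γ i = v}).IsTree :=
  stmt1_general n γ
end

section
/- For a path γ of length n from x to y in a finite connected graph, the set of last-exit edges forms a spanning tree of the set of vertices visited by γ. -/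
/-! Let `ℓ v` be the last time `γ` visits `v`. The last-exit edge of a visited vertex `v ≠ γ n`
joins it to its parent `γ (ℓ v + 1)`, which is last visited strictly later, and every
last-exit edge is of this form. Following parents from any visited vertex therefore ends at the
only parentless vertex `γ n`, and in a cycle the vertex with the smallest `ℓ` would have both of
its (distinct) cycle neighbours as its parent. -/

open scoped Classical

/-- The last-exit tree of a path of length `n`: for each vertex other than the end
that is visited, the (unoriented) edge by which it was last exited. -/
def leTree {V : Type*} (γ : ℕ → V) (n : ℕ) : Set (Sym2 V) :=
  {e | ∃ i < n, (∀ j ≤ n, i < j → γ j ≠ γ i) ∧ e = s(γ i, γ (i + 1))}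

namespace SimpleGraph

variable {W : Type*} {H : SimpleGraph W} (par : W → W) (r : W → ℕ)

theorem reachable_root_of_parent (hadj : ∀ a, par a ≠ a → H.Adj a (par a))
    (hr : ∀ a, par a ≠ a → r (par a) < r a) {root : W} (hroot : ∀ a, par a = a → a = root)
    (a : W) : H.Reachable a root := by
  induction a using (measure r).wf.induction with
  | _ a ih =>
    by_cases ha : par a = a
    · rw [hroot a ha]
    · exact (hadj a ha).reachable.trans (ih _ (hr a ha))

theorem isAcyclic_of_parent (hpar : ∀ a b, H.Adj a b → b = par a ∨ a = par b)
    (hr : ∀ a, par a ≠ a → r (par a) < r a) : H.IsAcyclic := by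
  have eq_par_of_adj {a b : W} (hab : H.Adj a b) (hle : r b ≤ r a) : b = par a :=
    (hpar a b hab).resolve_right fun h => by
      have := hr b (h ▸ hab.ne)
      rw [← h] at this
      omega
  intro v c hc
  obtain ⟨u, hu, hmax⟩ := Finset.exists_max_image c.support.toFinset r ⟨v, by simp⟩
  rw [List.mem_toFinset] at hu
  set c' := c.rotate u hu
  have hle {w : W} (hw : w ∈ c'.support) : r w ≤ r u :=
    hmax w (List.mem_toFinset.mpr ((c.mem_support_rotate_iff u hu).mp hw))
  have hc' : c'.IsCycle := hc.rotate hu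
  apply hc'.snd_ne_penultimate
  rw [eq_par_of_adj (c'.adj_snd hc'.not_nil) (hle (c'.getVert_mem_support 1)),
    eq_par_of_adj (c'.adj_penultimate hc'.not_nil).symm (hle (c'.getVert_mem_support _))]

theorem isTree_of_parent (hpar : ∀ a b, H.Adj a b → b = par a ∨ a = par b)
    (hadj : ∀ a, par a ≠ a → H.Adj a (par a)) (hr : ∀ a, par a ≠ a → r (par a) < r a)
    (root : W) (hroot : ∀ a, par a = a → a = root) : H.IsTree := by
  have : Nonempty W := ⟨root⟩
  exact ⟨(connected_iff_exists_forall_reachable H).mpr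
    ⟨root, fun a => (reachable_root_of_parent par r hadj hr hroot a).symm⟩,
    isAcyclic_of_parent par r hpar hr⟩

end SimpleGraph

section LastExit

variable {V : Type*} (γ : ℕ → V) (n : ℕ)

noncomputable def lastVisit (v : V) : ℕ := Nat.findGreatest (γ · = v) n

noncomputable def lastExit (v : V) : V :=
  if lastVisit γ n v < n then γ (lastVisit γ n v + 1) else v

variable {γ n}

theorem lastVisit_le (v : V) : lastVisit γ n v ≤ n := Nat.findGreatest_le n

theorem le_lastVisit {i : ℕ} (hi : i ≤ n) : i ≤ lastVisit γ n (γ i) := Nat.le_findGreatest hi rfl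

theorem apply_lastVisit {i : ℕ} (hi : i ≤ n) : γ (lastVisit γ n (γ i)) = γ i :=
  Nat.findGreatest_spec (P := (γ · = γ i)) hi rfl

theorem apply_ne_of_lastVisit_lt {v : V} {j : ℕ} (hj : lastVisit γ n v < j) (hjn : j ≤ n) :
    γ j ≠ v :=
  Nat.findGreatest_is_greatest hj hjn

theorem lastVisit_apply_eq {i : ℕ} (hi : i ≤ n) (hlast : ∀ j ≤ n, i < j → γ j ≠ γ i) :
    lastVisit γ n (γ i) = i := by
  refine le_antisymm (not_lt.mp fun hlt => ?_) (le_lastVisit hi)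
  exact hlast _ (lastVisit_le _) hlt (apply_lastVisit hi)

theorem lastExit_apply_eq {i : ℕ} (hi : i < n) (hlast : ∀ j ≤ n, i < j → γ j ≠ γ i) :
    lastExit γ n (γ i) = γ (i + 1) := by
  simp [lastExit, lastVisit_apply_eq hi.le hlast, hi]

theorem lastExit_eq_of_lastVisit_lt {v : V} (h : lastVisit γ n v < n) :
    lastExit γ n v = γ (lastVisit γ n v + 1) :=
  if_pos h

theorem lastVisit_lt_of_lastExit_ne {v : V} (hv : lastExit γ n v ≠ v) : lastVisit γ n v < n :=
  not_le.mp fun h => hv (if_neg (not_lt.mpr h))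

theorem lastVisit_lt_lastVisit_lastExit {v : V} (hv : lastExit γ n v ≠ v) :
    lastVisit γ n v < lastVisit γ n (lastExit γ n v) := by
  have h := lastVisit_lt_of_lastExit_ne hv
  rw [lastExit_eq_of_lastVisit_lt h]
  exact le_lastVisit h

theorem lastExit_mem {v : V} (hv : ∃ i ≤ n, γ i = v) : ∃ i ≤ n, γ i = lastExit γ n v := by
  by_cases h : lastVisit γ n v < n
  · exact ⟨_, h, (lastExit_eq_of_lastVisit_lt h).symm⟩
  · rwa [lastExit, if_neg h]

theorem eq_of_lastExit_eq_self {i : ℕ} (hi : i ≤ n) (hv : lastExit γ n (γ i) = γ i) :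
    γ i = γ n := by
  by_cases h : lastVisit γ n (γ i) < n
  · rw [lastExit_eq_of_lastVisit_lt h] at hv
    exact absurd hv (apply_ne_of_lastVisit_lt (Nat.lt_succ_self _) h)
  · rw [← apply_lastVisit (γ := γ) hi, le_antisymm (lastVisit_le _) (not_lt.mp h)]

theorem edgeGraph_leTree_adj_lastExit {i : ℕ} (hi : i ≤ n) (hv : lastExit γ n (γ i) ≠ γ i) :
    (edgeGraph (leTree γ n)).Adj (γ i) (lastExit γ n (γ i)) := by
  have h := lastVisit_lt_of_lastExit_ne hv
  refine ⟨hv.symm, lastVisit γ n (γ i), h, fun j hj hlt => ?_, ?_⟩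
  · rw [apply_lastVisit (γ := γ) hi]
    exact apply_ne_of_lastVisit_lt hlt hj
  · rw [lastExit_eq_of_lastVisit_lt h, apply_lastVisit (γ := γ) hi]

theorem eq_lastExit_of_edgeGraph_leTree_adj {a b : V} (hab : (edgeGraph (leTree γ n)).Adj a b) :
    b = lastExit γ n a ∨ a = lastExit γ n b := by
  obtain ⟨-, i, hi, hlast, he⟩ := hab
  rcases Sym2.eq_iff.mp he with ⟨rfl, rfl⟩ | ⟨rfl, rfl⟩
  · exact .inl (lastExit_apply_eq hi hlast).symm
  · exact .inr (lastExit_apply_eq hi hlast).symm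

end LastExit

theorem stmt2_general {V : Type*} (n : ℕ) (γ : ℕ → V) :
    ((edgeGraph (leTree γ n)).induce {v | ∃ i ≤ n, γ i = v}).IsTree := by
  refine SimpleGraph.isTree_of_parent (fun v => ⟨lastExit γ n v, lastExit_mem v.2⟩)
    (fun v => n - lastVisit γ n v) ?_ ?_ ?_ ⟨γ n, n, le_rfl, rfl⟩ ?_
  · intro a b hab
    simpa only [Subtype.ext_iff] using
      eq_lastExit_of_edgeGraph_leTree_adj (a := a.1) (b := b.1) hab
  · rintro ⟨_, i, hi, rfl⟩ hv
    exact edgeGraph_leTree_adj_lastExit hi (Subtype.coe_ne_coe.mpr hv)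
  · intro a ha
    show n - lastVisit γ n (lastExit γ n a) < n - lastVisit γ n a
    have := lastVisit_lt_lastVisit_lastExit (Subtype.coe_ne_coe.mpr ha)
    have := lastVisit_le (γ := γ) (n := n) (lastExit γ n a)
    omega
  · rintro ⟨_, i, hi, rfl⟩ hv
    exact Subtype.ext (eq_of_lastExit_eq_self hi (congrArg Subtype.val hv))

/-- The last-exit edges of a path form a spanning tree of the set of visited
vertices: the induced graph is connected and acyclic, i.e. a tree. -/
theorem stmt2 {V : Type*} [Fintype V] [DecidableEq V] (G : SimpleGraph V)
    (hconn : G.Connected) (x y : V) (n : ℕ) (γ : ℕ → V)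
    (h0 : γ 0 = x) (hn : γ n = y)
    (hadj : ∀ i < n, G.Adj (γ i) (γ (i + 1))) :
    ((edgeGraph (leTree γ n)).induce {v | ∃ i ≤ n, γ i = v}).IsTree :=
  stmt2_general n γ
end

section
/- In a balanced multi-digraph D with start x and end y admitting an Eulerian path, the following traversal produces an Eulerian path from x to y: fix, for each vertex v, a linear ordering of its outgoing edges whose maximum element is the edge of a fixed arborescence of in-tree edges directed toward y; starting at x, repeatedly leave the current vertex by the smallest unused outgoing edge; then this process uses every edge exactly once and terminates at y. -/
open scoped Classical

/-- Indegree of `v` in the multi-digraph with edge type `E` and target map `tgt`. -/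
def indeg {V E : Type*} [Fintype E] [DecidableEq V] (tgt : E → V) (v : V) : ℕ :=
  (Finset.univ.filter fun e => tgt e = v).card

/-- Outdegree of `v` in the multi-digraph with edge type `E` and source map `src`. -/
def outdeg {V E : Type*} [Fintype E] [DecidableEq V] (src : E → V) (v : V) : ℕ :=
  (Finset.univ.filter fun e => src e = v).card

/-- The multi-digraph is balanced with start `x` and end `y`. -/
def BalancedDigraph {V E : Type*} [Fintype E] [DecidableEq V] (src tgt : E → V) (x y : V) : Prop :=
  outdeg src x = indeg tgt x + 1 ∧ indeg tgt y = outdeg src y + 1 ∧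
    ∀ v, v ≠ x → v ≠ y → indeg tgt v = outdeg src v

/-- `p` is an Eulerian path from `x` to `y`: an enumeration of all edges, consecutively
concatenated, starting at `x` and ending at `y`. -/
def IsEulerianPath {V E : Type*} [Fintype E] (src tgt : E → V) (x y : V)
    (p : Fin (Fintype.card E) → E) : Prop :=
  Function.Bijective p ∧
    (∀ h : 0 < Fintype.card E,
      src (p ⟨0, h⟩) = x ∧ tgt (p ⟨Fintype.card E - 1, by omega⟩) = y) ∧
    ∀ i, ∀ h : i + 1 < Fintype.card E, tgt (p ⟨i, by omega⟩) = src (p ⟨i + 1, h⟩)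

/-! Counting departures and arrivals along the trail shows that the unused edges form a
multi-digraph balanced with start the endpoint `z` of the trail and end `y`. No out-edge at `z`
is unused, so `z = y`, and then the unused edges are balanced at every vertex: a vertex with an
unused in-edge has an unused out-edge. A greedy trail leaves a vertex by its darkest edge only
after all the others, so a vertex with an unused out-edge has its tree edge unused, and its tree
parent has an unused in-edge, hence an unused out-edge. Following the tree from the source of an
unused edge down to `y = z` yields an unused out-edge at `z`, which is absurd. -/

open Finset

section Trail

variable {V E : Type*} [DecidableEq V]

theorem card_departures_add_ite_last {m : ℕ} (vtx : Fin (m + 1) → V) (v : V) :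
    #{i : Fin m | vtx i.castSucc = v} + (if vtx (Fin.last m) = v then 1 else 0) =
      (if vtx 0 = v then 1 else 0) + #{i : Fin m | vtx i.succ = v} := by
  have hcast := Fin.sum_univ_castSucc fun j : Fin (m + 1) => if vtx j = v then 1 else 0
  have hsucc := Fin.sum_univ_succ fun j : Fin (m + 1) => if vtx j = v then 1 else 0
  simp only [card_filter]
  exact hcast.symm.trans hsucc

variable [Fintype E]

theorem BalancedDigraph.outdeg_add_ite {src tgt : E → V} {x y : V}
    (h : BalancedDigraph src tgt x y) (v : V) :
    outdeg src v + (if y = v then 1 else 0) = indeg tgt v + (if x = v then 1 else 0) := by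
  obtain ⟨hx, hy, hv⟩ := h
  by_cases hxv : x = v <;> by_cases hyv : y = v
  · subst hxv hyv; omega
  · subst hxv; simp only [↓reduceIte, if_neg hyv]; omega
  · subst hyv; simp only [↓reduceIte, if_neg hxv]; omega
  · simp only [if_neg hxv, if_neg hyv]; exact (hv v (Ne.symm hxv) (Ne.symm hyv)).symm

theorem card_fiber_eq_add_card_unused {m : ℕ} {p : Fin m → E} (hinj : Function.Injective p)
    (f : E → V) (w : Fin m → V) (hw : ∀ i, f (p i) = w i) (v : V) :
    #{e | f e = v} = #{i | w i = v} + #{e | e ∉ Set.range p ∧ f e = v} := by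
  have hused : #{e | e ∈ Set.range p ∧ f e = v} = #{i | w i = v} := by
    refine (card_bij (fun i _ => p i) ?_ (fun i _ j _ h => hinj h) ?_).symm
    · intro i hi
      simp_all
    · rintro _ he
      obtain ⟨⟨i, rfl⟩, hv⟩ := by simpa using he
      exact ⟨i, by simpa [← hw] using hv, rfl⟩
  rw [← hused, ← card_filter_add_card_filter_not (s := {e | f e = v}) (· ∈ Set.range p),
    filter_filter, filter_filter]
  simp only [and_comm]

end Trail

section GreedyTrail

variable {V E : Type*} {src tgt : E → V} {x y : V} {m : ℕ} {p : Fin m → E}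
  {vtx : Fin (m + 1) → V}

theorem notMem_range_of_darkest {r : E → ℕ}
    (hr : ∀ e e', src e = src e' → r e = r e' → e = e')
    (hsrc : ∀ i : Fin m, src (p i) = vtx i.castSucc)
    (hgreedy : ∀ i : Fin m, ∀ e, src e = vtx i.castSucc →
      (∀ j, j < i → p j ≠ e) → r (p i) ≤ r e)
    {t e : E} (hdark : ∀ e', src e' = src t → r e' ≤ r t) (he : e ∉ Set.range p)
    (het : src e = src t) : t ∉ Set.range p := by
  rintro ⟨i, rfl⟩
  have hlight := hgreedy i e (het.trans (hsrc i)) fun j _ hj => he ⟨j, hj⟩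
  exact he ⟨i, hr _ _ het.symm (le_antisymm hlight (hdark e het))⟩

variable [DecidableEq V] [Fintype E]

theorem card_unused_out_add_ite (hbal : BalancedDigraph src tgt x y)
    (hinj : Function.Injective p) (hv0 : vtx 0 = x)
    (hstep : ∀ i : Fin m, src (p i) = vtx i.castSucc ∧ tgt (p i) = vtx i.succ) (v : V) :
    #{e | e ∉ Set.range p ∧ src e = v} + (if y = v then 1 else 0) =
      #{e | e ∉ Set.range p ∧ tgt e = v} + (if vtx (Fin.last m) = v then 1 else 0) := by
  have hdeg := hbal.outdeg_add_ite v
  have hwalk := card_departures_add_ite_last vtx v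
  have hout := card_fiber_eq_add_card_unused hinj src _ (fun i => (hstep i).1) v
  have hin := card_fiber_eq_add_card_unused hinj tgt _ (fun i => (hstep i).2) v
  rw [hv0] at hwalk
  unfold outdeg indeg at hdeg
  omega

theorem last_eq_of_maximal (hbal : BalancedDigraph src tgt x y)
    (hinj : Function.Injective p) (hv0 : vtx 0 = x)
    (hstep : ∀ i : Fin m, src (p i) = vtx i.castSucc ∧ tgt (p i) = vtx i.succ)
    (hmax : ∀ e, src e = vtx (Fin.last m) → ∃ i, p i = e) :
    vtx (Fin.last m) = y := by
  have hbalance := card_unused_out_add_ite hbal hinj hv0 hstep (vtx (Fin.last m))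
  have hno_unused : #{e | e ∉ Set.range p ∧ src e = vtx (Fin.last m)} = 0 := by
    simp only [card_eq_zero, filter_eq_empty_iff, not_and]
    exact fun e _ hunused he => hunused (hmax e he)
  rw [hno_unused, if_pos rfl] at hbalance
  by_contra hne
  rw [if_neg (Ne.symm hne)] at hbalance
  omega

theorem exists_unused_out_of_unused_in (hbal : BalancedDigraph src tgt x y)
    (hinj : Function.Injective p) (hv0 : vtx 0 = x)
    (hstep : ∀ i : Fin m, src (p i) = vtx i.castSucc ∧ tgt (p i) = vtx i.succ)
    (hend : vtx (Fin.last m) = y) {t : E} (ht : t ∉ Set.range p) :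
    ∃ e ∉ Set.range p, src e = tgt t := by
  have hbalance := card_unused_out_add_ite hbal hinj hv0 hstep (tgt t)
  rw [hend, add_left_inj] at hbalance
  have hpos : 0 < #{e | e ∉ Set.range p ∧ tgt e = tgt t} :=
    card_pos.mpr ⟨t, mem_filter.mpr ⟨mem_univ t, ht, rfl⟩⟩
  obtain ⟨e, he⟩ := card_pos.mp (hbalance ▸ hpos)
  exact ⟨e, (mem_filter.mp he).2⟩

end GreedyTrail

theorem stmt7_general {V E : Type*} [Fintype E] [DecidableEq V]
    (src tgt : E → V) (x y : V)
    (hbal : BalancedDigraph src tgt x y)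
    (r : E → ℕ)
    (hr : ∀ e e', src e = src e' → r e = r e' → e = e')
    (A : Set E)
    (hA : (∀ e ∈ A, src e ≠ y) ∧ (∀ v, v ≠ y → ∃! e, e ∈ A ∧ src e = v) ∧
      ∀ v, Relation.ReflTransGen (fun a b => ∃ e ∈ A, src e = a ∧ tgt e = b) v y)
    (hdark : ∀ e ∈ A, ∀ e', src e' = src e → r e' ≤ r e)
    (m : ℕ) (p : Fin m → E) (vtx : Fin (m + 1) → V)
    (hinj : Function.Injective p)
    (hv0 : vtx 0 = x)
    (hstep : ∀ i : Fin m, src (p i) = vtx i.castSucc ∧ tgt (p i) = vtx i.succ)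
    (hgreedy : ∀ i : Fin m, ∀ e, src e = vtx i.castSucc →
      (∀ j, j < i → p j ≠ e) → r (p i) ≤ r e)
    (hmax : ∀ e, src e = vtx (Fin.last m) → ∃ i, p i = e) :
    m = Fintype.card E ∧ vtx (Fin.last m) = y := by
  have hend := last_eq_of_maximal hbal hinj hv0 hstep hmax
  have hpropagate : ∀ v w,
      Relation.ReflTransGen (fun a b => ∃ e ∈ A, src e = a ∧ tgt e = b) v w →
      (∃ e ∉ Set.range p, src e = v) → ∃ e ∉ Set.range p, src e = w := by
    intro v w hvw hv
    induction hvw with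
    | refl => exact hv
    | tail _ htree ih =>
      obtain ⟨t, htA, rfl, rfl⟩ := htree
      obtain ⟨e, he, het⟩ := ih
      exact exists_unused_out_of_unused_in hbal hinj hv0 hstep hend
        (notMem_range_of_darkest hr (fun i => (hstep i).1) hgreedy (hdark t htA) he het)
  refine ⟨?_, hend⟩
  by_contra hm
  obtain ⟨e₀, he₀⟩ : ∃ e, e ∉ Set.range p := by
    by_contra! hsurj
    exact hm (by simpa using Fintype.card_of_bijective ⟨hinj, hsurj⟩)
  obtain ⟨e, he, hey⟩ := hpropagate _ _ (hA.2.2 (src e₀)) ⟨e₀, he₀, rfl⟩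
  exact he (hmax e (hey.trans hend.symm))

/-- in a balanced multi-digraph with start `x` and end `y` that admits an
Eulerian path, fix a rank function `r` that linearly orders the outgoing edges at each
vertex in such a way that the darkest (maximal) outgoing edge at each vertex `v ≠ y`
belongs to a fixed spanning arborescence `A` directed toward `y`.  Then any trail from
`x` that always leaves the current vertex by the lightest unused outgoing edge, and that
cannot be extended, uses every edge exactly once and terminates at `y`. -/
theorem stmt7 {V E : Type*} [Fintype V] [Fintype E] [DecidableEq V] [DecidableEq E]
    (src tgt : E → V) (x y : V) (hxy : x ≠ y)
    (hbal : BalancedDigraph src tgt x y)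
    (hex : ∃ p, IsEulerianPath src tgt x y p)
    (r : E → ℕ)
    (hr : ∀ e e', src e = src e' → r e = r e' → e = e')
    (A : Set E)
    (hA : (∀ e ∈ A, src e ≠ y) ∧ (∀ v, v ≠ y → ∃! e, e ∈ A ∧ src e = v) ∧
      ∀ v, Relation.ReflTransGen (fun a b => ∃ e ∈ A, src e = a ∧ tgt e = b) v y)
    (hdark : ∀ e ∈ A, ∀ e', src e' = src e → r e' ≤ r e)
    (m : ℕ) (p : Fin m → E) (vtx : Fin (m + 1) → V)
    (hinj : Function.Injective p)
    (hv0 : vtx 0 = x)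
    (hstep : ∀ i : Fin m, src (p i) = vtx i.castSucc ∧ tgt (p i) = vtx i.succ)
    (hgreedy : ∀ i : Fin m, ∀ e, src e = vtx i.castSucc →
      (∀ j, j < i → p j ≠ e) → r (p i) ≤ r e)
    (hmax : ∀ e, src e = vtx (Fin.last m) → ∃ i, p i = e) :
    m = Fintype.card E ∧ vtx (Fin.last m) = y :=
  stmt7_general src tgt x y hbal r hr A hA hdark m p vtx hinj hv0 hstep hgreedy hmax
end

section
/- For an irreducible Markov chain with transition matrix P and stationary distribution π on a finite state space, for any two states x and y, π(y) · det((I−P)[x]) = π(x) · det((I−P)[y]), where (I−P)[z] denotes the matrix I−P with the row and column indexed by z deleted. -/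
open scoped Classical

/-- The matrix `M` with the rows and columns indexed by elements of `S` deleted. -/
def delMat {V : Type*} (M : Matrix V V ℝ) (S : Set V) :
    Matrix {v : V // v ∉ S} {v : V // v ∉ S} ℝ :=
  M.submatrix Subtype.val Subtype.val

/-!
Write `A = 1 - P`. By the maximum principle, the kernel of `A` is spanned by the constant
vector `1`, so `det A = 0` and `A * adj A = 0` forces every column of `adj A` to be constant.
Then `adj A * A = 0` says that the vector `d k = adj A k k = det (A[k])` is a left null vector
of `A`, as is `π`. The left kernel has the same dimension as the kernel, namely one, so `d`
and `π` are proportional, which is the claim.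
-/

open Matrix Module

theorem Matrix.adjugate_apply_self_eq_det_delMat {V : Type*} [Fintype V] [DecidableEq V]
    (A : Matrix V V ℝ) (z : V) : A.adjugate z z = (delMat A {z}).det := by
  set M := A.updateRow z (Pi.single z 1)
  have hblock : M.toSquareBlockProp (· ∉ ({z} : Set V)) = delMat A {z} := by
    ext i j
    simp [M, delMat, toSquareBlockProp, toBlock, updateRow_ne i.prop]
  have hcorner : M.toSquareBlockProp (fun i => ¬ i ∉ ({z} : Set V)) = 1 := by
    ext ⟨i, hi⟩ ⟨j, hj⟩
    rw [not_not, Set.mem_singleton_iff] at hi hj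
    subst hi hj
    simp [M, toSquareBlockProp, toBlock]
  rw [adjugate_apply, twoBlockTriangular_det M (· ∉ ({z} : Set V)), hblock, hcorner, det_one,
    mul_one]
  intro i hi j hj
  simp_all [M]

section LinearAlgebra

variable {n K : Type*} [Fintype n] [Field K]

theorem Matrix.finrank_ker_mulVecLin_transpose (A : Matrix n n K) :
    finrank K (LinearMap.ker Aᵀ.mulVecLin) = finrank K (LinearMap.ker A.mulVecLin) := by
  have h := LinearMap.finrank_range_add_finrank_ker A.mulVecLin
  have hT := LinearMap.finrank_range_add_finrank_ker Aᵀ.mulVecLin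
  have hrank : Aᵀ.rank = A.rank := rank_transpose A
  unfold Matrix.rank at hrank
  omega

theorem Matrix.vecMul_diag_adjugate_eq_zero [DecidableEq n] [Nonempty n] {A : Matrix n n K}
    (hA : LinearMap.ker A.mulVecLin = K ∙ (1 : n → K)) :
    (fun k => A.adjugate k k) ᵥ* A = 0 := by
  have hdet : A.det = 0 := by
    refine exists_mulVec_eq_zero_iff.1 ⟨1, one_ne_zero, ?_⟩
    rw [← mulVecLin_apply, ← LinearMap.mem_ker, hA]
    exact Submodule.mem_span_singleton_self _
  have hconst (i k : n) : A.adjugate i k = A.adjugate k k := by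
    have hcol : A.adjugateᵀ k ∈ LinearMap.ker A.mulVecLin := by
      rw [LinearMap.mem_ker, mulVecLin_apply]
      ext i
      change (A * A.adjugate) i k = 0
      simp [mul_adjugate, hdet]
    obtain ⟨c, hc⟩ := Submodule.mem_span_singleton.1 (hA ▸ hcol)
    have hc' (j : n) : A.adjugate j k = c := by simpa using (congrFun hc j).symm
    rw [hc' i, hc' k]
  obtain ⟨i⟩ := ‹Nonempty n›
  calc (fun k => A.adjugate k k) ᵥ* A = (A.adjugate * A) i := by
        rw [mul_apply_eq_vecMul]
        exact congrArg (· ᵥ* A) (funext fun k => (hconst i k).symm)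
    _ = 0 := by rw [adjugate_mul, hdet, zero_smul]; rfl

theorem Submodule.mul_apply_comm_of_finrank_eq_one {ι : Type*} {W : Submodule K (ι → K)}
    (hW : finrank K W = 1) {u w : ι → K} (hu : u ∈ W) (hw : w ∈ W) (x y : ι) :
    u x * w y = u y * w x := by
  obtain ⟨v, -, hv⟩ := finrank_eq_one_iff'.1 hW
  obtain ⟨a, ha⟩ := hv ⟨u, hu⟩
  obtain ⟨b, hb⟩ := hv ⟨w, hw⟩
  rw [Subtype.ext_iff] at ha hb
  subst ha hb
  simp only [Submodule.coe_smul, Pi.smul_apply, smul_eq_mul]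
  ring

end LinearAlgebra

section MaximumPrinciple

variable {V 𝕜 : Type*} [Fintype V] [Field 𝕜] [LinearOrder 𝕜] [IsStrictOrderedRing 𝕜]
  {P : Matrix V V 𝕜}

theorem Matrix.eq_of_mulVec_eq_self_of_irreducible (hnn : ∀ u v, 0 ≤ P u v)
    (hrow : ∀ u, ∑ v, P u v = 1)
    (hirr : ∀ u v, Relation.ReflTransGen (fun a b => 0 < P a b) u v)
    {f : V → 𝕜} (hf : P *ᵥ f = f) (a b : V) : f a = f b := by
  obtain ⟨m, -, hm⟩ := Finset.exists_max_image Finset.univ f ⟨a, Finset.mem_univ a⟩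
  have hmax (v : V) : f v ≤ f m := hm v (Finset.mem_univ v)
  -- `f c` is a `P c`-weighted average of values `≤ f m`, so it equals `f m` only if every
  -- value carrying positive weight does.
  have hstep (c d : V) (hc : f c = f m) (hcd : 0 < P c d) : f d = f m := by
    by_contra hne
    have hlt : ∑ w, P c w * f w < ∑ w, P c w * f m :=
      Finset.sum_lt_sum (fun w _ => mul_le_mul_of_nonneg_left (hmax w) (hnn c w))
        ⟨d, Finset.mem_univ d, mul_lt_mul_of_pos_left (lt_of_le_of_ne (hmax d) hne) hcd⟩
    rw [← Finset.sum_mul, hrow, one_mul] at hlt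
    have hfc : ∑ w, P c w * f w = f c := congrFun hf c
    linarith
  have hconst (v : V) : f v = f m := by
    induction hirr m v with
    | refl => rfl
    | tail _ hcd ih => exact hstep _ _ ih hcd
  rw [hconst a, hconst b]

theorem Matrix.ker_one_sub_mulVecLin_eq_span_one [DecidableEq V] [Nonempty V]
    (hnn : ∀ u v, 0 ≤ P u v) (hrow : ∀ u, ∑ v, P u v = 1)
    (hirr : ∀ u v, Relation.ReflTransGen (fun a b => 0 < P a b) u v) :
    LinearMap.ker (1 - P).mulVecLin = 𝕜 ∙ (1 : V → 𝕜) := by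
  apply le_antisymm
  · intro f hf
    rw [LinearMap.mem_ker, mulVecLin_apply, sub_mulVec, one_mulVec, sub_eq_zero] at hf
    obtain ⟨i⟩ := ‹Nonempty V›
    refine Submodule.mem_span_singleton.2 ⟨f i, funext fun j => ?_⟩
    simpa using eq_of_mulVec_eq_self_of_irreducible hnn hrow hirr hf.symm i j
  · rw [Submodule.span_singleton_le_iff_mem, LinearMap.mem_ker, mulVecLin_apply, sub_mulVec,
      one_mulVec, sub_eq_zero]
    ext u
    simp [mulVec, dotProduct, hrow u]

end MaximumPrinciple

theorem stmt13_general {V : Type*} [Fintype V] [DecidableEq V]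
    (P : Matrix V V ℝ) (hnn : ∀ u v, 0 ≤ P u v) (hrow : ∀ u, ∑ v, P u v = 1)
    (hirr : ∀ u v, Relation.ReflTransGen (fun a b => 0 < P a b) u v)
    (π : V → ℝ)
    (hπ : ∀ v, π v = ∑ u, π u * P u v)
    (x y : V) :
    π y * (delMat (1 - P) {x}).det = π x * (delMat (1 - P) {y}).det := by
  have : Nonempty V := ⟨x⟩
  have hker := ker_one_sub_mulVecLin_eq_span_one hnn hrow hirr
  have hleft : finrank ℝ (LinearMap.ker (1 - P)ᵀ.mulVecLin) = 1 := by
    rw [finrank_ker_mulVecLin_transpose, hker, finrank_span_singleton one_ne_zero]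
  have hπ_mem : π ∈ LinearMap.ker (1 - P)ᵀ.mulVecLin := by
    rw [LinearMap.mem_ker, mulVecLin_apply, mulVec_transpose, vecMul_sub, vecMul_one, sub_eq_zero]
    exact funext hπ
  have hd_mem : (fun k => (1 - P).adjugate k k) ∈ LinearMap.ker (1 - P)ᵀ.mulVecLin := by
    rw [LinearMap.mem_ker, mulVecLin_apply, mulVec_transpose]
    exact vecMul_diag_adjugate_eq_zero hker
  simpa only [adjugate_apply_self_eq_det_delMat] using
    Submodule.mul_apply_comm_of_finrank_eq_one hleft hπ_mem hd_mem y x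

/-- for an irreducible Markov chain with transition matrix `P` and
stationary distribution `π`, for any two states `x` and `y`,
`π(y) · det((I−P)[x]) = π(x) · det((I−P)[y])`, where `(I−P)[z]` is `I−P` with the row
and column of `z` deleted. -/
theorem stmt13 {V : Type*} [Fintype V] [DecidableEq V]
    (P : Matrix V V ℝ) (hnn : ∀ u v, 0 ≤ P u v) (hrow : ∀ u, ∑ v, P u v = 1)
    (hirr : ∀ u v, Relation.ReflTransGen (fun a b => 0 < P a b) u v)
    (π : V → ℝ) (hπnn : ∀ v, 0 ≤ π v) (hπ1 : ∑ v, π v = 1)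
    (hπ : ∀ v, π v = ∑ u, π u * P u v)
    (x y : V) :
    π y * (delMat (1 - P) {x}).det = π x * (delMat (1 - P) {y}).det :=
  stmt13_general P hnn hrow hirr π hπ x y
end

section
/- (Green function via Cramer's rule) For an irreducible Markov chain with transition matrix P on a finite state space, a nonempty set Z of states, and a state a ∉ Z, the expected number of visits to a strictly before hitting Z, starting from a, equals det((I−P)[Z ∪ {a}]) / det((I−P)[Z]), where A[S] denotes deletion of the rows and columns indexed by S. -/
open scoped Classical

/-- Extend a finite path `γ : Fin (n+1) → V` to a function `ℕ → V`. -/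
def pad {V : Type*} {n : ℕ} (γ : Fin (n + 1) → V) : ℕ → V :=
  fun i => γ ⟨min i n, by omega⟩

/-- The Green function `G_Z(a, a)`: the expected number of visits to `a` strictly before
hitting `Z`, for the chain with transition probabilities `p` started at `a`. -/
noncomputable def green {V : Type*} [Fintype V] (p : V → V → ℝ) (Z : Set V) (a : V) : ℝ :=
  ∑' n : ℕ, ∑ γ : Fin (n + 1) → V,
    if pad γ 0 = a ∧ pad γ n = a ∧ ∀ i ≤ n, pad γ i ∉ Z then
      ∏ k ∈ Finset.range n, p (pad γ k) (pad γ (k + 1)) else 0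

/-!
Let `Q = P[Z]` be the chain killed on entering `Z`. Expanding `(Q ^ n) a a` as a sum over paths
shows that `G_Z(a, a) = ∑ₙ (Q ^ n) a a`. Irreducibility forces every state outside `Z` to leave
with positive probability within finitely many steps, so some power of `Q` has ℓ∞-operator norm
below `1`; hence the Neumann series converges to `(1 - Q)⁻¹`. Its diagonal entry at `a` is the
cofactor `det((I - P)[Z ∪ {a}])` divided by `det((I - P)[Z])`.
-/

open Finset

theorem summable_pow_of_norm_pow_lt_one {R : Type*} [NormedRing R] [CompleteSpace R] {x : R}
    {m : ℕ} (hm : 0 < m) (h : ‖x ^ m‖ < 1) : Summable (x ^ ·) := by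
  have : NeZero m := ⟨hm.ne'⟩
  rw [← (Nat.divModEquiv m).symm.summable_iff]
  refine Summable.of_norm_bounded ((summable_norm_geometric_of_norm_lt_one h).mul_of_nonneg
    (Summable.of_finite (f := fun r : Fin m => ‖x ^ (r : ℕ)‖))
    (fun _ => norm_nonneg _) (fun _ => norm_nonneg _)) fun p => ?_
  simp only [Function.comp_apply, Nat.divModEquiv_symm_apply, pow_add, pow_mul']
  exact norm_mul_le _ _

namespace Matrix

variable {ι : Type*} [Fintype ι] [DecidableEq ι]

theorem pow_apply_eq_sum_paths {R : Type*} [CommSemiring R] (Q : Matrix ι ι R) (n : ℕ)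
    (x y : ι) :
    (Q ^ n) x y = ∑ γ : Fin (n + 1) → ι,
      if γ 0 = x ∧ γ (Fin.last n) = y then ∏ k : Fin n, Q (γ k.castSucc) (γ k.succ)
      else 0 := by
  induction n generalizing y with
  | zero =>
    rw [← (Equiv.funUnique (Fin 1) ι).symm.sum_comp]
    simp [one_apply, ite_and, Fin.last]
  | succ n ih =>
    rw [← (Fin.snocEquiv fun _ => ι).sum_comp, Fintype.sum_prod_type, sum_comm, pow_succ,
      mul_apply]
    simp only [ih, sum_mul]
    rw [sum_comm]
    refine sum_congr rfl fun γ _ => ?_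
    simp [Fin.snocEquiv, Fin.prod_univ_castSucc, ite_and, Fin.succ_castSucc, -Fin.castSucc_succ]

theorem adjugate_apply_self {R : Type*} [CommRing R] (A : Matrix ι ι R) (i : ι) :
    A.adjugate i i = (A.submatrix (Subtype.val : {j // j ≠ i} → ι) Subtype.val).det := by
  let e := Equiv.sumCompl (· = i)
  have hblock : (A.updateRow i (Pi.single i 1)).submatrix e e =
      fromBlocks 1 0 (A.submatrix Subtype.val Subtype.val)
        (A.submatrix Subtype.val Subtype.val) := by
    ext (j | j) (k | k)
    · simp [e, k.2, Subsingleton.elim j k]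
    · simp [e, j.2, Ne.symm k.2]
    · simp [e, j.2]
    · simp [e, j.2]
  rw [adjugate_apply, ← det_submatrix_equiv_self e, hblock, det_fromBlocks_zero₁₂, det_one,
    one_mul]

theorem inv_apply_self {K : Type*} [Field K] (A : Matrix ι ι K) (i : ι) :
    A⁻¹ i i = (A.submatrix (Subtype.val : {j // j ≠ i} → ι) Subtype.val).det / A.det := by
  rw [inv_def, smul_apply, adjugate_apply_self, Ring.inverse_eq_inv', smul_eq_mul,
    div_eq_inv_mul]

omit [Fintype ι] [DecidableEq ι] in
theorem tsum_apply_apply {X R : Type*} [AddCommMonoid R] [TopologicalSpace R] [T2Space R]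
    {f : X → Matrix ι ι R} (hf : Summable f) (i j : ι) : (∑' x, f x) i j = ∑' x, f x i j :=
  ((Pi.hasSum.mp (Pi.hasSum.mp hf.hasSum i)) j).tsum_eq.symm

theorem sum_pow_add_apply {R : Type*} [CommSemiring R] (Q : Matrix ι ι R) (m n : ℕ) (i : ι) :
    ∑ j, (Q ^ (m + n)) i j = ∑ k, (Q ^ m) i k * ∑ j, (Q ^ n) k j := by
  simp only [pow_add, mul_apply, mul_sum]
  exact sum_comm

section Substochastic

variable {Q : Matrix ι ι ℝ} (hQ0 : ∀ i j, 0 ≤ Q i j) (hQ1 : ∀ i, ∑ j, Q i j ≤ 1)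
include hQ0 hQ1

theorem sum_pow_apply_le_one (n : ℕ) (i : ι) : ∑ j, (Q ^ n) i j ≤ 1 := by
  induction n generalizing i with
  | zero => simp [one_apply]
  | succ n ih =>
    rw [add_comm, sum_pow_add_apply, pow_one]
    calc ∑ k, Q i k * ∑ j, (Q ^ n) k j ≤ ∑ k, Q i k :=
          sum_le_sum fun k _ => mul_le_of_le_one_right (hQ0 i k) (ih k)
      _ ≤ 1 := hQ1 i

theorem antitone_sum_pow_apply (i : ι) : Antitone fun n => ∑ j, (Q ^ n) i j := by
  intro m n hmn
  obtain ⟨k, rfl⟩ := Nat.exists_eq_add_of_le hmn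
  dsimp only
  rw [sum_pow_add_apply]
  exact sum_le_sum fun l _ =>
    mul_le_of_le_one_right (pow_apply_nonneg hQ0 m i l) (sum_pow_apply_le_one hQ0 hQ1 k l)

attribute [local instance] Matrix.linftyOpNormedRing Matrix.linftyOpNormedAlgebra

theorem exists_linfty_norm_pow_lt_one (hescape : ∀ i, ∃ n, ∑ j, (Q ^ n) i j < 1) :
    ∃ m, 0 < m ∧ ‖Q ^ m‖ < 1 := by
  choose N hN using hescape
  refine ⟨univ.sup N + 1, Nat.succ_pos _, ?_⟩
  rw [linfty_opNorm_def, ← NNReal.coe_one, NNReal.coe_lt_coe, Finset.sup_lt_iff zero_lt_one]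
  intro i _
  rw [← NNReal.coe_lt_coe, NNReal.coe_sum]
  simp only [coe_nnnorm, Real.norm_of_nonneg (pow_apply_nonneg hQ0 _ i _), NNReal.coe_one]
  exact (antitone_sum_pow_apply hQ0 hQ1 i
    ((le_sup (mem_univ i)).trans (Nat.le_succ _))).trans_lt (hN i)

theorem summable_pow_of_exists_sum_pow_apply_lt_one
    (hescape : ∀ i, ∃ n, ∑ j, (Q ^ n) i j < 1) : Summable (Q ^ ·) := by
  obtain ⟨m, hm, hQm⟩ := exists_linfty_norm_pow_lt_one hQ0 hQ1 hescape
  have : CompleteSpace (Matrix ι ι ℝ) := FiniteDimensional.complete ℝ _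
  exact summable_pow_of_norm_pow_lt_one hm hQm

end Substochastic

end Matrix

section DeletedMatrix

variable {V : Type*} {Z : Set V}

theorem delMat_one_sub [DecidableEq V] (M : Matrix V V ℝ) (S : Set V) :
    delMat (1 - M) S = 1 - delMat M S := by
  ext i j
  simp [delMat, Matrix.one_apply, Subtype.ext_iff]

theorem det_delMat_submatrix_ne [Fintype V] [DecidableEq V] (M : Matrix V V ℝ) {a : V}
    (ha : a ∉ Z) :
    ((delMat M Z).submatrix (Subtype.val : {w // w ≠ ⟨a, ha⟩} → _) Subtype.val).det =
      (delMat M (Z ∪ {a})).det := by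
  let e : {v // v ∉ Z ∪ {a}} ≃ {w : {v // v ∉ Z} // w ≠ ⟨a, ha⟩} :=
    { toFun := fun v =>
        ⟨⟨v, fun h => v.2 (Or.inl h)⟩, fun h => v.2 (Or.inr (congrArg Subtype.val h))⟩
      invFun := fun w => ⟨w.1, by
        rintro (h | h)
        · exact w.1.2 h
        · exact w.2 (Subtype.ext h)⟩
      left_inv := fun _ => rfl
      right_inv := fun _ => rfl }
  exact (Matrix.det_submatrix_equiv_self e _).symm

theorem sum_delMat_apply_le [Fintype V] {P : Matrix V V ℝ} (hP0 : ∀ u v, 0 ≤ P u v)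
    (i : {v // v ∉ Z}) : ∑ j, delMat P Z i j ≤ ∑ v, P i v := by
  change ∑ j : {v // v ∉ Z}, P i j ≤ _
  rw [← sum_subtype (univ.filter (· ∉ Z)) (by simp) (P i)]
  exact sum_le_sum_of_subset_of_nonneg (filter_subset _ _) fun v _ _ => hP0 i v

end DeletedMatrix

section Green

variable {V : Type*}

theorem pad_val {n : ℕ} (γ : Fin (n + 1) → V) (i : Fin (n + 1)) : pad γ i = γ i :=
  congrArg γ (Fin.ext (min_eq_left i.is_le))

theorem green_summand_eq (P : Matrix V V ℝ) (Z : Set V) (a : V) {n : ℕ}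
    (γ : Fin (n + 1) → V) :
    (if pad γ 0 = a ∧ pad γ n = a ∧ ∀ i ≤ n, pad γ i ∉ Z then
      ∏ k ∈ range n, P (pad γ k) (pad γ (k + 1)) else 0) =
    if ∀ i, γ i ∉ Z then
      if γ 0 = a ∧ γ (Fin.last n) = a then ∏ k : Fin n, P (γ k.castSucc) (γ k.succ) else 0
    else 0 := by
  have avoid : (∀ i ≤ n, pad γ i ∉ Z) ↔ ∀ i, γ i ∉ Z := by
    refine ⟨fun h i => pad_val γ i ▸ h i i.is_le, fun h i hi => ?_⟩
    have := h ⟨i, Nat.lt_succ_of_le hi⟩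
    rwa [← pad_val γ ⟨i, _⟩] at this
  have weight : ∏ k ∈ range n, P (pad γ k) (pad γ (k + 1)) =
      ∏ k : Fin n, P (γ k.castSucc) (γ k.succ) := by
    rw [← Fin.prod_univ_eq_prod_range]
    exact prod_congr rfl fun k _ => by rw [← pad_val γ k.castSucc, ← pad_val γ k.succ]; rfl
  have start : pad γ 0 = γ 0 := pad_val γ 0
  have finish : pad γ n = γ (Fin.last n) := pad_val γ (Fin.last n)
  simp only [start, finish, avoid, weight]
  split_ifs <;> tauto

theorem green_eq_tsum_pow_delMat_apply [Fintype V] [DecidableEq V] (P : Matrix V V ℝ)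
    {Z : Set V} {a : V} (ha : a ∉ Z) :
    green (fun u v => P u v) Z a = ∑' n, (delMat P Z ^ n) ⟨a, ha⟩ ⟨a, ha⟩ := by
  refine tsum_congr fun n => ?_
  beta_reduce
  rw [sum_congr rfl fun γ _ => green_summand_eq P Z a γ, Matrix.pow_apply_eq_sum_paths, sum_ite,
    sum_const_zero, add_zero,
    sum_subtype (p := fun γ : Fin (n + 1) → V => ∀ i, γ i ∉ Z) _ (fun γ => by simp),
    ← (Equiv.subtypePiEquivPi (p := fun _ v => v ∉ Z)).symm.sum_comp]
  refine sum_congr rfl fun δ _ => ?_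
  congr 1
  simp only [Subtype.ext_iff]
  rfl

end Green

section Survival

variable {V : Type*} [Fintype V] [DecidableEq V] {P : Matrix V V ℝ} {Z : Set V}

variable (P Z) in
/-- The probability that the chain started at `v` avoids `Z` at times `0, …, n`. -/
noncomputable def survivalProb (n : ℕ) (v : V) : ℝ :=
  if h : v ∈ Z then 0 else ∑ j, (delMat P Z ^ n) ⟨v, h⟩ j

theorem survivalProb_succ {u : V} (hu : u ∉ Z) (n : ℕ) :
    survivalProb P Z (n + 1) u = ∑ v, P u v * survivalProb P Z n v := by
  simp only [survivalProb, dif_neg hu, mul_dite, mul_zero]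
  rw [add_comm, Matrix.sum_pow_add_apply, pow_one]
  conv_rhs => rw [← Fintype.sum_subtype_add_sum_subtype (· ∈ Z),
    Fintype.sum_eq_zero _ fun i => dif_pos i.2, zero_add]
  exact sum_congr rfl fun i _ => by rw [dif_neg i.2]; rfl

theorem survivalProb_le_one (hP0 : ∀ u v, 0 ≤ P u v) (hP1 : ∀ u, ∑ v, P u v ≤ 1) (n : ℕ)
    (v : V) : survivalProb P Z n v ≤ 1 := by
  unfold survivalProb
  split_ifs
  · exact zero_le_one
  · exact Matrix.sum_pow_apply_le_one (Q := delMat P Z) (fun i j => hP0 i j)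
      (fun i => (sum_delMat_apply_le hP0 i).trans (hP1 i)) n _

theorem exists_survivalProb_lt_one (hP0 : ∀ u v, 0 ≤ P u v) (hP1 : ∀ u, ∑ v, P u v ≤ 1)
    {u z : V} (hz : z ∈ Z) (hreach : Relation.ReflTransGen (fun a b => 0 < P a b) u z) :
    ∃ n, survivalProb P Z n u < 1 := by
  induction hreach using Relation.ReflTransGen.head_induction_on with
  | refl => exact ⟨0, by simp [survivalProb, hz]⟩
  | @head u c huc _ ih =>
    by_cases hu : u ∈ Z
    · exact ⟨0, by simp [survivalProb, hu]⟩
    obtain ⟨n, hn⟩ := ih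
    refine ⟨n + 1, ?_⟩
    rw [survivalProb_succ hu]
    calc ∑ v, P u v * survivalProb P Z n v < ∑ v, P u v :=
          sum_lt_sum
            (fun v _ => mul_le_of_le_one_right (hP0 u v) (survivalProb_le_one hP0 hP1 n v))
            ⟨c, mem_univ c, mul_lt_of_lt_one_right huc hn⟩
      _ ≤ 1 := hP1 u

theorem summable_pow_delMat (hP0 : ∀ u v, 0 ≤ P u v) (hP1 : ∀ u, ∑ v, P u v ≤ 1)
    (hreach : ∀ u, ∃ z ∈ Z, Relation.ReflTransGen (fun a b => 0 < P a b) u z) :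
    Summable (delMat P Z ^ ·) := by
  refine Matrix.summable_pow_of_exists_sum_pow_apply_lt_one (fun i j => hP0 i j)
    (fun i => (sum_delMat_apply_le hP0 i).trans (hP1 i)) fun i => ?_
  obtain ⟨z, hz, hiz⟩ := hreach i
  obtain ⟨n, hn⟩ := exists_survivalProb_lt_one hP0 hP1 hz hiz
  exact ⟨n, by rwa [survivalProb, dif_neg i.2] at hn⟩

end Survival

/-- Green function via Cramer's rule: for an irreducible Markov chain with
transition matrix `P`, a nonempty set `Z` of states, and a state `a ∉ Z`, the expected
number of visits to `a` strictly before hitting `Z`, starting from `a`, equals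
`det((I−P)[Z ∪ {a}]) / det((I−P)[Z])`. -/
theorem stmt14 {V : Type*} [Fintype V] [DecidableEq V]
    (P : Matrix V V ℝ) (hnn : ∀ u v, 0 ≤ P u v) (hrow : ∀ u, ∑ v, P u v = 1)
    (hirr : ∀ u v, Relation.ReflTransGen (fun a b => 0 < P a b) u v)
    (Z : Set V) (hZ : Z.Nonempty) (a : V) (ha : a ∉ Z) :
    green (fun u v => P u v) Z a =
      (delMat (1 - P) (Z ∪ {a})).det / (delMat (1 - P) Z).det := by
  obtain ⟨z, hz⟩ := hZ
  have hsum := summable_pow_delMat hnn (fun u => (hrow u).le) fun u => ⟨z, hz, hirr u z⟩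
  have hinv : ∑' n, delMat P Z ^ n = (1 - delMat P Z)⁻¹ :=
    (Matrix.inv_eq_right_inv hsum.one_sub_mul_tsum_pow).symm
  rw [green_eq_tsum_pow_delMat_apply P ha, ← Matrix.tsum_apply_apply hsum, hinv,
    Matrix.inv_apply_self, ← delMat_one_sub, det_delMat_submatrix_ne]
end
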